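/- arXiv:2605.04536 — 2 statements merged into one kernel-verified Lean document; each statement's English description precedes it below -/
import Mathlib

section
/- Let P₁, P₂ be probability measures on ℝ and φ(x) = exp(−x²/(2s²)), s > 0. If ∫ x^j φ(x) dP₁(x) = ∫ x^j φ(x) dP₂(x) for all nonnegative integers j, then P₁ = P₂. -/
/-!
Tilting `P₁` and `P₂` by the Gaussian weight `φ` gives probability measures with exponential
moments of every order, and by hypothesis they have the same moments (the case `j = 0` matches
the normalising constants). Their complex moment generating functions are therefore entire
with the same Taylor coefficients at `0`, hence equal, so the tilted measures coincide;
undoing the tilt gives `P₁ = P₂`.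
-/

open MeasureTheory ProbabilityTheory Real

namespace ProbabilityTheory

variable {Ω : Type*} {m : MeasurableSpace Ω} {X : Ω → ℝ} {μ : Measure Ω}

lemma integrableExpSet_eq_univ (hX : ∀ t : ℝ, Integrable (fun ω ↦ exp (t * X ω)) μ) :
    integrableExpSet X μ = Set.univ :=
  Set.eq_univ_of_forall hX

lemma differentiable_complexMGF (hX : ∀ t : ℝ, Integrable (fun ω ↦ exp (t * X ω)) μ) :
    Differentiable ℂ (complexMGF X μ) := by
  have h := differentiableOn_complexMGF (X := X) (μ := μ)
  simp only [integrableExpSet_eq_univ hX, interior_univ, Set.mem_univ, Set.ofPred_true] at h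
  exact differentiableOn_univ.mp h

lemma iteratedDeriv_complexMGF_zero (hX : ∀ t : ℝ, Integrable (fun ω ↦ exp (t * X ω)) μ)
    (n : ℕ) : iteratedDeriv n (complexMGF X μ) 0 = ((∫ ω, X ω ^ n ∂μ : ℝ) : ℂ) := by
  rw [iteratedDeriv_complexMGF (by simp [integrableExpSet_eq_univ hX])]
  simpa using integral_ofReal (𝕜 := ℂ) (μ := μ) (f := fun ω ↦ X ω ^ n)

end ProbabilityTheory

theorem MeasureTheory.Measure.ext_of_integral_pow_eq {μ ν : Measure ℝ}
    [IsFiniteMeasure μ] [IsFiniteMeasure ν]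
    (hμ : ∀ t : ℝ, Integrable (fun x ↦ exp (t * x)) μ)
    (hν : ∀ t : ℝ, Integrable (fun x ↦ exp (t * x)) ν)
    (h : ∀ n : ℕ, ∫ x, x ^ n ∂μ = ∫ x, x ^ n ∂ν) : μ = ν := by
  refine Measure.ext_of_complexMGF_id_eq (funext fun z ↦ ?_)
  rw [← Complex.taylorSeries_eq_of_entire' 0 z (differentiable_complexMGF (X := id) hμ),
    ← Complex.taylorSeries_eq_of_entire' 0 z (differentiable_complexMGF (X := id) hν)]
  simp_rw [iteratedDeriv_complexMGF_zero (X := id) hμ, iteratedDeriv_complexMGF_zero (X := id) hν]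
  simp [h]

lemma MeasureTheory.integral_tilted_eq_div {α : Type*} {m : MeasurableSpace α} {μ : Measure α}
    (f g : α → ℝ) :
    ∫ x, g x ∂(μ.tilted f) = (∫ x, exp (f x) * g x ∂μ) / ∫ x, exp (f x) ∂μ := by
  simp_rw [integral_tilted, smul_eq_mul, div_mul_eq_mul_div, integral_div]

lemma mul_add_neg_sq_div_le (s t x : ℝ) (hs : s ≠ 0) :
    t * x + -(x ^ 2) / (2 * s ^ 2) ≤ t ^ 2 * s ^ 2 / 2 := by
  have h_square : t ^ 2 * s ^ 2 / 2 - (t * x + -(x ^ 2) / (2 * s ^ 2)) =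
      (x - t * s ^ 2) ^ 2 / (2 * s ^ 2) := by
    field_simp
    ring
  linarith [show 0 ≤ (x - t * s ^ 2) ^ 2 / (2 * s ^ 2) by positivity]

lemma integrable_exp_neg_sq_div_mul_exp_mul {P : Measure ℝ} [IsFiniteMeasure P] {s : ℝ}
    (hs : s ≠ 0) (t : ℝ) :
    Integrable (fun x ↦ exp (-(x ^ 2) / (2 * s ^ 2)) * exp (t * x)) P := by
  refine .of_bound (by fun_prop) (exp (t ^ 2 * s ^ 2 / 2)) (ae_of_all _ fun x ↦ ?_)
  rw [← exp_add, norm_of_nonneg (exp_nonneg _), exp_le_exp, add_comm]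
  exact mul_add_neg_sq_div_le s t x hs

/-- If all Gaussian-kernel-weighted moments of two probability
measures coincide, the measures are equal. -/
theorem stmt13 (s : ℝ) (hs : 0 < s) (P₁ P₂ : Measure ℝ)
    [IsProbabilityMeasure P₁] [IsProbabilityMeasure P₂]
    (h : ∀ j : ℕ, ∫ x, x ^ j * Real.exp (-(x ^ 2) / (2 * s ^ 2)) ∂P₁ =
      ∫ x, x ^ j * Real.exp (-(x ^ 2) / (2 * s ^ 2)) ∂P₂) :
    P₁ = P₂ := by
  set g : ℝ → ℝ := fun x ↦ -(x ^ 2) / (2 * s ^ 2)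
  have hweight (P : Measure ℝ) [IsProbabilityMeasure P] (t : ℝ) :
      Integrable (fun x ↦ exp (g x) * exp (t * x)) P :=
    integrable_exp_neg_sq_div_mul_exp_mul hs.ne' t
  have hg (P : Measure ℝ) [IsProbabilityMeasure P] : Integrable (fun x ↦ exp (g x)) P := by
    simpa using hweight P 0
  have hmoment (P : Measure ℝ) (n : ℕ) : ∫ x, x ^ n ∂(P.tilted g) =
      (∫ x, x ^ n * exp (g x) ∂P) / ∫ x, x ^ 0 * exp (g x) ∂P := by
    simp_rw [integral_tilted_eq_div, mul_comm (exp _), pow_zero, one_mul]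
  have htilted : P₁.tilted g = P₂.tilted g :=
    Measure.ext_of_integral_pow_eq (fun t ↦ (integrable_tilted_iff (hg P₁) _).2 (hweight P₁ t))
      (fun t ↦ (integrable_tilted_iff (hg P₂) _).2 (hweight P₂ t))
      fun n ↦ by rw [hmoment, hmoment, h n, h 0]
  rw [← tilted_neg_same (hg P₁), htilted, tilted_neg_same (hg P₂)]
end

section
/- Let h(x) = sin(2π ln x) for x > 0 and let f_{0,1}(x) = (x√(2π))⁻¹ exp(−(ln x)²/2) be the standard log-normal density. Then for every nonnegative integer j, ∫₀^∞ x^j h(x) f_{0,1}(x) dx = 0. -/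
/-!
Substituting `x = exp t` turns the integral into `∫ exp (j t - t² / 2) sin (2π t) dt / √(2π)`.
Completing the square, `j t - t² / 2 = j² / 2 - (t - j)² / 2`, and since `j` is an integer,
`sin (2π t) = sin (2π (t - j))`; after translating by `j` the integrand is the odd function
`exp (-u² / 2) sin (2π u)`, whose integral over `ℝ` vanishes.
-/

open Real MeasureTheory

section

variable {E : Type*} [NormedAddCommGroup E] [NormedSpace ℝ E]

theorem integral_eq_zero_of_odd {G : Type*} [MeasurableSpace G] [AddGroup G] [MeasurableNeg G]
    (μ : Measure G) [μ.IsNegInvariant] {f : G → E} (hf : Function.Odd f) :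
    ∫ x, f x ∂μ = 0 := by
  have h := integral_neg_eq_self f μ
  simp only [hf _, integral_neg] at h
  have h2 : (2 : ℝ) • ∫ x, f x ∂μ = 0 := by
    rw [two_smul]
    nth_rw 1 [← h]
    exact neg_add_cancel _
  exact (smul_eq_zero.mp h2).resolve_left two_ne_zero

theorem integral_comp_exp (g : ℝ → E) : ∫ t, exp t • g (exp t) = ∫ x in Set.Ioi 0, g x := by
  rw [← range_exp, ← Set.image_univ, ← setIntegral_univ]
  simpa [abs_of_pos (exp_pos _)] using (integral_image_eq_integral_abs_deriv_smul
    MeasurableSet.univ (fun t _ ↦ (hasDerivAt_exp t).hasDerivWithinAt)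
    exp_injective.injOn g).symm

theorem integral_comp_log (g : ℝ → E) : ∫ x in Set.Ioi 0, x⁻¹ • g (log x) = ∫ t, g t := by
  simpa [exp_ne_zero] using (integral_comp_exp fun x ↦ x⁻¹ • g (log x)).symm

end

theorem odd_exp_neg_sq_mul_sin : Function.Odd fun u : ℝ ↦ exp (-u ^ 2 / 2) * sin (2 * π * u) := by
  intro u
  simp only [neg_sq, mul_neg, sin_neg]

theorem exp_mul_sub_sq_mul_sin_eq (n : ℤ) (t : ℝ) :
    exp (n * t - t ^ 2 / 2) * sin (2 * π * t) =
      exp (n ^ 2 / 2) * (exp (-(t - n) ^ 2 / 2) * sin (2 * π * (t - n))) := by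
  have hsin : sin (2 * π * (t - n)) = sin (2 * π * t) := by
    rw [mul_sub, ← sin_sub_int_mul_two_pi (2 * π * t) n]
    ring_nf
  rw [hsin, ← mul_assoc, ← exp_add]
  ring_nf

/-- The Stieltjes perturbation `h(x) = sin(2π ln x)` is orthogonal to
all monomials against the standard log-normal density:
`∫₀^∞ x^j sin(2π ln x) f_{0,1}(x) dx = 0`. -/
theorem stmt16 (j : ℕ) :
    ∫ x in Set.Ioi (0 : ℝ), x ^ j * Real.sin (2 * π * Real.log x) *
      ((x * Real.sqrt (2 * π))⁻¹ * Real.exp (-(Real.log x) ^ 2 / 2)) = 0 := by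
  set φ : ℝ → ℝ := fun u ↦ exp (-u ^ 2 / 2) * sin (2 * π * u)
  set G : ℝ → ℝ := fun t ↦ (√(2 * π))⁻¹ * exp ((j : ℤ) ^ 2 / 2) * φ (t - (j : ℤ))
  have hpoint : Set.EqOn
      (fun x ↦ x ^ j * sin (2 * π * log x) * ((x * √(2 * π))⁻¹ * exp (-log x ^ 2 / 2)))
      (fun x ↦ x⁻¹ • G (log x)) (Set.Ioi 0) := by
    intro x hx
    obtain ⟨t, rfl⟩ : ∃ t, exp t = x := ⟨log x, exp_log hx⟩
    simp only [log_exp, smul_eq_mul, G, φ]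
    calc exp t ^ j * sin (2 * π * t) * ((exp t * √(2 * π))⁻¹ * exp (-t ^ 2 / 2))
        = (exp t)⁻¹ * ((√(2 * π))⁻¹ * (exp ((j : ℤ) * t - t ^ 2 / 2) * sin (2 * π * t))) := by
          rw [← exp_nat_mul, mul_inv, sub_eq_add_neg, exp_add, neg_div]
          push_cast
          ring
      _ = _ := by
          rw [exp_mul_sub_sq_mul_sin_eq]
          ring
  calc _ = ∫ x in Set.Ioi 0, x⁻¹ • G (log x) := setIntegral_congr_fun measurableSet_Ioi hpoint
    _ = ∫ t, G t := integral_comp_log G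
    _ = 0 := by
      rw [integral_const_mul, integral_sub_right_eq_self φ,
        integral_eq_zero_of_odd volume odd_exp_neg_sq_mul_sin, mul_zero]
end
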